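/- Let n > 4, let k be a divisor of n with 1 < k and 2k ≤ n, set m = n/k, and let p be a prime. Then Sym(n) contains a quasi-semiregular element of order p in its action on the set of partitions of {1,…,n} into m parts of size k if and only if p is odd, k = p, and 2 ≤ m ≤ p. -/

import Mathlib

/-!
Writing `P.image (·.image g)` as `g • P`, the left-hand side says that `g`, of prime order `p`,
fixes exactly one `k`-partition `Q`; the condition on the powers `g ^ j` is then automatic,
because `g ^ j` with `p ∤ j` generates the same group as `g`.

Suppose `g` fixes only `Q`. Applying a cycle of `g` (which commutes with `g`) to `Q` shows that
every part of `Q` is `g`-invariant, hence a union of `p`-cycles and fixed points. Exchanging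
`g`-invariant pieces between two parts then gives `k = p` and at most one part made of fixed
points, and the translates `g ^ i • T` of a transversal `T` of `p` cycle-parts would form a second
fixed partition, so there are at most `p - 1` cycle-parts. Thus `2 ≤ m ≤ p`, and `p = 2` would
force `n = 4`.

Conversely, let `g` have cycle type `p^(m-1)`. A part of a `g`-fixed partition that `g` moves
consists of points of `p` distinct cycles, which do not exist; so every part is invariant, hence
either a cycle of `g` or its set of `p` fixed points.
-/

/-- `P` is a partition of `{1,…,n}` (here `Fin n`) into parts of size `k`:
every member of `P` has `k` elements and every point lies in exactly one member of `P`. -/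
def IsSizedPartition (n k : ℕ) (P : Finset (Finset (Fin n))) : Prop :=
  (∀ A ∈ P, A.card = k) ∧ ∀ a : Fin n, ∃! A : Finset (Fin n), A ∈ P ∧ a ∈ A

open Finset Equiv Equiv.Perm
open scoped Pointwise

theorem mem_of_zpow_mem_of_not_dvd {G : Type*} [Group G] {H : Subgroup G} {g : G}
    (hg : (orderOf g).Prime) {i : ℤ} (hi : ¬ (orderOf g : ℤ) ∣ i) (h : g ^ i ∈ H) : g ∈ H := by
  obtain ⟨u, v, huv⟩ := (Nat.prime_iff_prime_int.1 hg).irreducible.coprime_iff_not_dvd.2 hi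
  have hgv : g = (g ^ i) ^ v := by
    calc g = g ^ (u * orderOf g + v * i) := by rw [huv, zpow_one]
      _ = (g ^ i) ^ v := by
        rw [zpow_add, mul_comm u, zpow_mul, zpow_natCast, pow_orderOf_eq_one, one_zpow, one_mul,
          mul_comm, zpow_mul]
  exact hgv ▸ H.zpow_mem h v

theorem zpow_smul_eq_of_smul_eq {G β : Type*} [Group G] [MulAction G β] {g : G} {b : β}
    (h : g • b = b) (i : ℤ) : g ^ i • b = b :=
  (MulAction.stabilizer G b).zpow_mem h i

theorem Finset.smul_finset_eq_self_of_forall {G β : Type*} [Group G] [MulAction G β]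
    [DecidableEq β] {g : G} {s : Finset β} (h : ∀ x ∈ s, g • x ∈ s) : g • s = s :=
  eq_of_subset_of_card_le (fun _ hy => by obtain ⟨x, hx, rfl⟩ := mem_smul_finset.1 hy; exact h x hx)
    (card_smul_finset g s).ge

theorem image_image_eq_smul {α : Type*} [DecidableEq α] (h : Perm α) (P : Finset (Finset α)) :
    P.image (fun A => A.image ⇑h) = h • P := rfl

namespace Equiv.Perm

variable {α : Type*} {g : Perm α} {x : α}

theorem dvd_of_zpow_apply_eq_self (hg : (orderOf g).Prime) (hx : g x ≠ x) {i : ℤ}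
    (h : (g ^ i) x = x) : (orderOf g : ℤ) ∣ i := by
  by_contra hi
  exact hx (mem_of_zpow_mem_of_not_dvd (H := MulAction.stabilizer (Perm α) x) hg hi h)

theorem pow_eq_pow_of_apply_eq (hg : (orderOf g).Prime) (hx : g x ≠ x) {i j : ℕ}
    (h : (g ^ i) x = (g ^ j) x) : g ^ i = g ^ j := by
  rw [pow_eq_pow_iff_modEq, Nat.modEq_iff_dvd]
  refine dvd_of_zpow_apply_eq_self hg hx ?_
  rw [show (j : ℤ) - i = -i + j by ring, zpow_add, mul_apply, zpow_natCast, ← h, zpow_neg,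
    zpow_natCast, inv_eq_iff_eq]

variable [DecidableEq α]

theorem pairwiseDisjoint_pow_smul (hg : (orderOf g).Prime) {T : Finset α}
    (hTg : ∀ t ∈ T, g t ≠ t) (hTsep : ∀ t ∈ T, ∀ t' ∈ T, g.SameCycle t t' → t = t') :
    (((range (orderOf g)).image fun i => g ^ i • T : Finset (Finset α)) :
      Set (Finset α)).PairwiseDisjoint id := by
  rintro _ hC _ hC' hne
  obtain ⟨i, -, rfl⟩ := mem_image.1 hC
  obtain ⟨j, -, rfl⟩ := mem_image.1 hC'
  refine disjoint_left.2 fun a hai haj => hne ?_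
  obtain ⟨t, ht, rfl⟩ := mem_smul_finset.1 hai
  obtain ⟨t', ht', htt'⟩ := mem_smul_finset.1 haj
  have hsame : g.SameCycle t' ((g ^ j) t') := sameCycle_pow_right.2 SameCycle.rfl
  rw [show (g ^ j) t' = (g ^ i) t from htt'] at hsame
  obtain rfl : t' = t := hTsep t' ht' t ht (sameCycle_pow_right.1 hsame)
  exact congrArg (· • T) (pow_eq_pow_of_apply_eq hg (hTg t' ht) htt').symm

variable [Fintype α]

theorem commute_cycleOf (g : Perm α) (x : α) : Commute g (g.cycleOf x) := by
  ext y
  simp only [coe_mul, Function.comp_apply, cycleOf_apply, sameCycle_apply_right]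
  split_ifs <;> rfl

theorem card_support_cycleOf_of_prime (hg : (orderOf g).Prime) (hx : g x ≠ x) :
    #(g.cycleOf x).support = orderOf g := by
  rw [← (g.isCycle_cycleOf hx).orderOf]
  refine (hg.eq_one_or_self_of_dvd _ (orderOf_cycleOf_dvd_orderOf g x)).resolve_left fun h => ?_
  exact hx ((cycleOf_eq_one_iff g).1 (orderOf_eq_one_iff.1 h))

theorem smul_support_cycleOf (g : Perm α) (x : α) :
    g • (g.cycleOf x).support = (g.cycleOf x).support :=
  smul_finset_eq_self_of_forall fun y hy => by
    rw [mem_support_cycleOf_iff] at hy ⊢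
    exact ⟨sameCycle_apply_right.2 hy.1, hy.2⟩

theorem support_cycleOf_subset_of_smul_eq {A : Finset α} (hA : g • A = A) (hx : x ∈ A) :
    (g.cycleOf x).support ⊆ A := by
  intro y hy
  obtain ⟨i, rfl⟩ := (mem_support_cycleOf_iff.1 hy).1
  rw [← zpow_smul_eq_of_smul_eq hA i]
  exact smul_mem_smul_finset hx

theorem support_cycleOf_eq_of_smul_eq (hg : (orderOf g).Prime) {A : Finset α} (hA : g • A = A)
    (hcard : #A = orderOf g) (hx : x ∈ A) (hgx : g x ≠ x) : (g.cycleOf x).support = A :=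
  eq_of_subset_of_card_le (support_cycleOf_subset_of_smul_eq hA hx)
    (by rw [hcard, card_support_cycleOf_of_prime hg hgx])

theorem exists_subset_card_eq_smul_eq (hg : (orderOf g).Prime) {B : Finset α} (hB : g • B = B)
    (h : orderOf g ≤ #B) : ∃ T ⊆ B, #T = orderOf g ∧ g • T = T := by
  by_cases hmoved : ∃ y ∈ B, g y ≠ y
  · obtain ⟨y, hy, hgy⟩ := hmoved
    exact ⟨_, support_cycleOf_subset_of_smul_eq hB hy, card_support_cycleOf_of_prime hg hgy,
      smul_support_cycleOf g y⟩
  · push Not at hmoved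
    obtain ⟨T, hTB, hT⟩ := exists_subset_card_eq h
    exact ⟨T, hTB, hT, smul_finset_eq_self_of_forall fun t ht => by
      rwa [Perm.smul_def, hmoved t (hTB ht)]⟩

theorem exists_lt_orderOf_mem_pow_smul_iff {T : Finset α} {a : α} :
    (∃ i < orderOf g, a ∈ g ^ i • T) ↔ ∃ t ∈ T, g.SameCycle t a := by
  constructor
  · rintro ⟨i, -, ha⟩
    obtain ⟨t, ht, rfl⟩ := mem_smul_finset.1 ha
    exact ⟨t, ht, sameCycle_pow_right.2 SameCycle.rfl⟩
  · rintro ⟨t, ht, hta⟩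
    obtain ⟨i, hi, rfl⟩ := hta.exists_pow_eq'
    exact ⟨i, hi, smul_mem_smul_finset ht⟩

theorem smul_image_pow_smul (g : Perm α) (T : Finset α) :
    g • (range (orderOf g)).image (fun i => g ^ i • T) =
      (range (orderOf g)).image (fun i => g ^ i • T) :=
  smul_finset_eq_self_of_forall fun C hC => by
    obtain ⟨i, -, rfl⟩ := mem_image.1 hC
    rw [smul_smul, ← pow_succ', ← pow_mod_orderOf]
    exact mem_image.2 ⟨_, mem_range.2 (Nat.mod_lt _ (orderOf_pos g)), rfl⟩

def cyclePartition (g : Perm α) : Finset (Finset α) :=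
  insert g.supportᶜ (g.support.image fun x => (g.cycleOf x).support)

theorem smul_cyclePartition (g : Perm α) : g • g.cyclePartition = g.cyclePartition :=
  smul_finset_eq_self_of_forall fun A hA => by
    suffices g • A = A by rwa [this]
    rcases mem_insert.1 hA with rfl | hA
    · exact smul_finset_eq_self_of_forall fun x hx => by
        rwa [Perm.smul_def, notMem_support.1 (mem_compl.1 hx)]
    · obtain ⟨x, -, rfl⟩ := mem_image.1 hA
      exact smul_support_cycleOf g x

end Equiv.Perm

namespace IsSizedPartition

variable {n k : ℕ} {g : Perm (Fin n)} {P Q : Finset (Finset (Fin n))} {A B : Finset (Fin n)}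

theorem eq_of_mem (hP : IsSizedPartition n k P) (hA : A ∈ P) (hB : B ∈ P) {a : Fin n}
    (haA : a ∈ A) (haB : a ∈ B) : A = B :=
  (hP.2 a).unique ⟨hA, haA⟩ ⟨hB, haB⟩

theorem card_mul (hP : IsSizedPartition n k P) : #P * k = n := by
  have hcover : P.biUnion id = univ :=
    eq_univ_of_forall fun a => mem_biUnion.2 (hP.2 a).exists
  have hdisj : (P : Set (Finset (Fin n))).PairwiseDisjoint id := fun A hA B hB hAB =>
    disjoint_left.2 fun _ haA haB => hAB (hP.eq_of_mem hA hB haA haB)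
  calc #P * k = ∑ A ∈ P, #A := by rw [sum_congr rfl hP.1, sum_const, smul_eq_mul]
    _ = #(P.biUnion id) := (card_biUnion hdisj).symm
    _ = n := by rw [hcover, card_univ, Fintype.card_fin]

theorem smul (hP : IsSizedPartition n k P) (h : Perm (Fin n)) :
    IsSizedPartition n k (h • P) := by
  refine ⟨fun A hA => ?_, fun a => ?_⟩
  · obtain ⟨B, hB, rfl⟩ := mem_smul_finset.1 hA
    rw [card_smul_finset, hP.1 B hB]
  · obtain ⟨B, ⟨hB, haB⟩, hBu⟩ := hP.2 (h⁻¹ a)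
    refine ⟨h • B, ⟨smul_mem_smul_finset hB, inv_smul_mem_iff.1 haB⟩, fun C ⟨hC, haC⟩ => ?_⟩
    obtain ⟨C, hCP, rfl⟩ := mem_smul_finset.1 hC
    rw [hBu C ⟨hCP, inv_smul_mem_iff.2 haC⟩]

theorem sdiff_union (hP : IsSizedPartition n k P) {D D' : Finset (Finset (Fin n))} (hD : D ⊆ P)
    (hcard : ∀ A ∈ D', #A = k) (hdisj : (D' : Set (Finset (Fin n))).PairwiseDisjoint id)
    (hcover : D'.biUnion id = D.biUnion id) : IsSizedPartition n k (P \ D ∪ D') := by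
  refine ⟨fun A hA => ?_, fun a => ?_⟩
  · rcases mem_union.1 hA with hA | hA
    exacts [hP.1 A (mem_sdiff.1 hA).1, hcard A hA]
  by_cases ha : a ∈ D.biUnion id
  · obtain ⟨A, hA, haA⟩ := mem_biUnion.1 (hcover ▸ ha)
    refine ⟨A, ⟨mem_union_right _ hA, haA⟩, fun C ⟨hC, haC⟩ => ?_⟩
    rcases mem_union.1 hC with hC | hC
    · obtain ⟨B, hB, haB⟩ := mem_biUnion.1 ha
      exact absurd (hP.eq_of_mem (mem_sdiff.1 hC).1 (hD hB) haC haB ▸ hB) (mem_sdiff.1 hC).2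
    · exact hdisj.elim_finset hC hA a haC haA
  · obtain ⟨B, ⟨hB, haB⟩, hBu⟩ := hP.2 a
    have hBD : B ∉ D := fun h => ha (mem_biUnion.2 ⟨B, h, haB⟩)
    refine ⟨B, ⟨mem_union_left _ (mem_sdiff.2 ⟨hB, hBD⟩), haB⟩, fun C ⟨hC, haC⟩ => ?_⟩
    rcases mem_union.1 hC with hC | hC
    · exact hBu C ⟨(mem_sdiff.1 hC).1, haC⟩
    · exact absurd (hcover ▸ mem_biUnion.2 ⟨C, hC, haC⟩) ha

theorem eq_of_sameCycle (hg : (orderOf g).Prime) (hP : IsSizedPartition n k P) (hPg : g • P = P)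
    (hA : A ∈ P) (hAg : g • A ≠ A) {x y : Fin n} (hx : x ∈ A) (hy : y ∈ A)
    (hxy : g.SameCycle x y) : x = y := by
  obtain ⟨i, rfl⟩ := hxy
  have hiA : g ^ i • A = A :=
    hP.eq_of_mem (zpow_smul_eq_of_smul_eq hPg i ▸ smul_mem_smul_finset hA) hA
      (smul_mem_smul_finset hx) hy
  by_cases hi : (orderOf g : ℤ) ∣ i
  · rw [orderOf_dvd_iff_zpow_eq_one.1 hi, one_apply]
  · exact absurd (mem_of_zpow_mem_of_not_dvd (H := MulAction.stabilizer _ A) hg hi hiA) hAg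

theorem apply_ne_of_smul_ne (hP : IsSizedPartition n k P) (hPg : g • P = P) (hA : A ∈ P)
    (hAg : g • A ≠ A) {x : Fin n} (hx : x ∈ A) : g x ≠ x := fun h =>
  hAg (hP.eq_of_mem (hPg ▸ smul_mem_smul_finset hA) hA (h ▸ smul_mem_smul_finset hx) hx)

/-- The cycle of `g` through `x ∈ A` commutes with `g`, so it carries `P` to another `g`-fixed
partition; it moves `x` but, `A` meeting each cycle at most once, no other point of `A`. -/
theorem exists_ne_smul_eq_of_smul_ne (hg : (orderOf g).Prime) (hk : 1 < k)
    (hP : IsSizedPartition n k P) (hPg : g • P = P) (hA : A ∈ P) (hAg : g • A ≠ A) :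
    ∃ P', IsSizedPartition n k P' ∧ g • P' = P' ∧ P' ≠ P := by
  obtain ⟨x, hx, y, hy, hxy⟩ := one_lt_card.1 ((hP.1 A hA).symm ▸ hk)
  set h := g.cycleOf x
  have hhy : h y = y := cycleOf_apply_of_not_sameCycle fun hs =>
    hxy (hP.eq_of_sameCycle hg hPg hA hAg hx hy hs)
  refine ⟨h • P, hP.smul h, by rw [smul_smul, (commute_cycleOf g x).eq, mul_smul, hPg],
    fun hhP => hAg ?_⟩
  have hhA : h • A ∈ P := hhP ▸ smul_mem_smul_finset hA
  have hgxA : g x ∈ h • A := cycleOf_apply_self g x ▸ smul_mem_smul_finset hx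
  calc g • A = h • A :=
        hP.eq_of_mem (hPg ▸ smul_mem_smul_finset hA) hhA (smul_mem_smul_finset hx) hgxA
    _ = A := hP.eq_of_mem hhA hA (hhy ▸ smul_mem_smul_finset hy) hy

theorem exists_ne_smul_eq_of_swap (hP : IsSizedPartition n k P) (hPg : g • P = P) (hA : A ∈ P)
    (hB : B ∈ P) (hAB : A ≠ B) (hAg : g • A = A) (hBg : g • B = B) {S T : Finset (Fin n)}
    (hSA : S ⊂ A) (hTB : T ⊆ B) (hST : #S = #T) (hT : T.Nonempty) (hSg : g • S = S)
    (hTg : g • T = T) : ∃ P', IsSizedPartition n k P' ∧ g • P' = P' ∧ P' ≠ P := by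
  have hdisj : Disjoint A B := disjoint_left.2 fun a haA haB => hAB (hP.eq_of_mem hA hB haA haB)
  have hSB : Disjoint S B := hdisj.mono_left hSA.subset
  have hTA : Disjoint T A := hdisj.symm.mono_left hTB
  have hA'B' : Disjoint (A \ S ∪ T) (B \ T ∪ S) :=
    disjoint_union_left.2 ⟨disjoint_union_right.2 ⟨hdisj.mono sdiff_subset sdiff_subset,
      sdiff_disjoint⟩, disjoint_union_right.2 ⟨disjoint_sdiff, (hSB.mono_right hTB).symm⟩⟩
  have hSk : #S ≤ k := hP.1 A hA ▸ card_le_card hSA.subset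
  have hTk : #T ≤ k := hP.1 B hB ▸ card_le_card hTB
  refine ⟨P \ {A, B} ∪ {A \ S ∪ T, B \ T ∪ S}, hP.sdiff_union ?_ ?_ ?_ ?_, ?_, fun h => ?_⟩
  · simp [insert_subset_iff, hA, hB]
  · simp only [mem_insert, mem_singleton]
    rintro C (rfl | rfl)
    · rw [card_union_of_disjoint (hTA.symm.mono_left sdiff_subset),
        card_sdiff_of_subset hSA.subset, hP.1 A hA]
      omega
    · rw [card_union_of_disjoint (hSB.symm.mono_left sdiff_subset),
        card_sdiff_of_subset hTB, hP.1 B hB]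
      omega
  · rw [coe_pair, Set.PairwiseDisjoint, Set.pairwise_pair]
    exact fun _ => ⟨hA'B', hA'B'.symm⟩
  · ext a
    have : a ∈ S → a ∈ A := fun h => hSA.subset h
    have : a ∈ T → a ∈ B := fun h => hTB h
    simp only [biUnion_insert, singleton_biUnion, id, mem_union, mem_sdiff]
    tauto
  · simp only [smul_finset_union, smul_finset_sdiff, smul_finset_insert, smul_finset_singleton,
      hPg, hAg, hBg, hSg, hTg]
  · obtain ⟨t, ht⟩ := hT
    obtain ⟨a, haA, haS⟩ := exists_of_ssubset hSA
    have hA' : A \ S ∪ T ∈ P := h ▸ mem_union_right _ (mem_insert_self _ _)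
    exact hAB ((hP.eq_of_mem hA' hA (mem_union_left _ (mem_sdiff.2 ⟨haA, haS⟩)) haA).symm.trans
      (hP.eq_of_mem hA' hB (mem_union_right _ ht) (hTB ht)))

/-- The translates `g ^ i • T`, `i < p`, repartition the union of the cycles through `T`. -/
theorem exists_ne_smul_eq_of_transversal (hg : (orderOf g).Prime) (hk : 1 < k)
    (hP : IsSizedPartition n k P) (hPg : g • P = P) {T : Finset (Fin n)} (hTk : #T = k)
    (hTg : ∀ t ∈ T, g t ≠ t) (hTsep : ∀ t ∈ T, ∀ t' ∈ T, g.SameCycle t t' → t = t')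
    (hTP : ∀ t ∈ T, (g.cycleOf t).support ∈ P) :
    ∃ P', IsSizedPartition n k P' ∧ g • P' = P' ∧ P' ≠ P := by
  set D := T.image fun t => (g.cycleOf t).support
  set D' := (range (orderOf g)).image fun i => g ^ i • T
  have hD : g • D = D := smul_finset_eq_self_of_forall fun C hC => by
    obtain ⟨t, -, rfl⟩ := mem_image.1 hC
    rwa [smul_support_cycleOf]
  refine ⟨P \ D ∪ D', hP.sdiff_union (image_subset_iff.2 hTP) ?_
    (pairwiseDisjoint_pow_smul hg hTg hTsep) ?_, ?_, fun h => ?_⟩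
  · intro C hC
    obtain ⟨i, -, rfl⟩ := mem_image.1 hC
    rw [card_smul_finset, hTk]
  · ext a
    simp only [D, D', mem_biUnion, id, exists_mem_image, mem_range,
      exists_lt_orderOf_mem_pow_smul_iff, mem_support_cycleOf_iff]
    exact exists_congr fun t => and_congr_right fun ht =>
      (and_iff_left (mem_support.2 (hTg t ht))).symm
  · rw [smul_finset_union, smul_finset_sdiff, hPg, hD, smul_image_pow_smul]
  · obtain ⟨t, ht, t', ht', htt'⟩ := one_lt_card.1 (hTk ▸ hk)
    have hTP' : T ∈ P :=
      h ▸ mem_union_right _ (mem_image.2 ⟨0, mem_range.2 hg.pos, one_smul _ _⟩)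
    have hT : T = (g.cycleOf t).support := hP.eq_of_mem hTP' (hTP t ht) ht
      (mem_support_cycleOf_iff.2 ⟨SameCycle.rfl, mem_support.2 (hTg t ht)⟩)
    exact htt' (hTsep t ht t' ht' (mem_support_cycleOf_iff.1 (hT ▸ ht')).1)

theorem smul_eq_of_unique (hg : (orderOf g).Prime) (hk : 1 < k) (hQ : IsSizedPartition n k Q)
    (hQg : g • Q = Q) (huniq : ∀ P, IsSizedPartition n k P → g • P = P → P = Q) (hA : A ∈ Q) :
    g • A = A := by
  by_contra hAg
  obtain ⟨P, hP, hPg, hne⟩ := hQ.exists_ne_smul_eq_of_smul_ne hg hk hQg hA hAg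
  exact hne (huniq P hP hPg)

theorem orderOf_eq_of_unique (hg : (orderOf g).Prime) (hQ : IsSizedPartition n k Q)
    (hQg : g • Q = Q) (huniq : ∀ P, IsSizedPartition n k P → g • P = P → P = Q)
    (hparts : ∀ A ∈ Q, g • A = A) (hQ2 : 1 < #Q) : orderOf g = k := by
  obtain ⟨x, hx⟩ : ∃ x, g x ≠ x := by
    by_contra! h
    exact hg.one_lt.ne' (orderOf_eq_one_iff.2 (Perm.ext h))
  obtain ⟨A, ⟨hA, hxA⟩, -⟩ := hQ.2 x
  have hS := support_cycleOf_subset_of_smul_eq (hparts A hA) hxA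
  have hScard := card_support_cycleOf_of_prime hg hx
  have hle : orderOf g ≤ k := hScard ▸ hQ.1 A hA ▸ card_le_card hS
  refine hle.antisymm (not_lt.1 fun hlt => ?_)
  obtain ⟨B, hB, hBA⟩ := exists_mem_ne hQ2 A
  obtain ⟨T, hTB, hT, hTg⟩ :=
    exists_subset_card_eq_smul_eq hg (hparts B hB) (hQ.1 B hB ▸ hle)
  have hSA : (g.cycleOf x).support ⊂ A :=
    hS.ssubset_of_ne fun h => by rw [← hQ.1 A hA, ← h, hScard] at hlt; exact lt_irrefl _ hlt
  obtain ⟨P, hP, hPg, hne⟩ := hQ.exists_ne_smul_eq_of_swap hQg hA hB hBA.symm (hparts A hA)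
    (hparts B hB) hSA hTB (hScard.trans hT.symm) (card_pos.1 (hT ▸ hg.pos))
    (smul_support_cycleOf g x) hTg
  exact hne (huniq P hP hPg)

theorem card_filter_forall_apply_eq_le_one (hk : 1 < k) (hQ : IsSizedPartition n k Q)
    (hQg : g • Q = Q) (huniq : ∀ P, IsSizedPartition n k P → g • P = P → P = Q)
    (hparts : ∀ A ∈ Q, g • A = A) : #(Q.filter fun A => ∀ x ∈ A, g x = x) ≤ 1 := by
  refine card_le_one.2 fun B₁ hB₁ B₂ hB₂ => by_contra fun hne => ?_
  rw [mem_filter] at hB₁ hB₂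
  obtain ⟨b₁, hb₁⟩ := card_pos.1 (hQ.1 B₁ hB₁.1 ▸ (by omega : 0 < k))
  obtain ⟨b₂, hb₂⟩ := card_pos.1 (hQ.1 B₂ hB₂.1 ▸ (by omega : 0 < k))
  have hfix : ∀ b, g b = b → g • ({b} : Finset (Fin n)) = {b} := fun b hb => by
    rw [smul_finset_singleton, Perm.smul_def, hb]
  have hb₁B₁ : {b₁} ⊂ B₁ := (singleton_subset_iff.2 hb₁).ssubset_of_ne fun h => by
    have := hQ.1 B₁ hB₁.1
    rw [← h, card_singleton] at this
    omega
  obtain ⟨P, hP, hPg, hne'⟩ := hQ.exists_ne_smul_eq_of_swap hQg hB₁.1 hB₂.1 hne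
    (hparts _ hB₁.1) (hparts _ hB₂.1) hb₁B₁ (singleton_subset_iff.2 hb₂) rfl
    (singleton_nonempty _) (hfix _ (hB₁.2 b₁ hb₁)) (hfix _ (hB₂.2 b₂ hb₂))
  exact hne' (huniq P hP hPg)

theorem card_filter_exists_apply_ne_lt (hg : (orderOf g).Prime) (hk : 1 < k)
    (hkg : orderOf g = k) (hQ : IsSizedPartition n k Q) (hQg : g • Q = Q)
    (huniq : ∀ P, IsSizedPartition n k P → g • P = P → P = Q) (hparts : ∀ A ∈ Q, g • A = A) :
    #(Q.filter fun A => ∃ x ∈ A, g x ≠ x) < orderOf g := by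
  by_contra! hle
  obtain ⟨E, hEQ, hE⟩ := exists_subset_card_eq hle
  have hEQ' : ∀ A ∈ E, A ∈ Q := fun A hA => (mem_filter.1 (hEQ hA)).1
  have hmoved : ∀ A ∈ E, ∃ x ∈ A, g x ≠ x := fun A hA => (mem_filter.1 (hEQ hA)).2
  obtain ⟨A₀, hA₀⟩ := card_pos.1 (hE ▸ hg.pos)
  obtain ⟨x₀, -⟩ := hmoved A₀ hA₀
  have : Nonempty (Fin n) := ⟨x₀⟩
  choose! r hrA hrg using hmoved
  have hcyc : ∀ A ∈ E, (g.cycleOf (r A)).support = A := fun A hA =>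
    support_cycleOf_eq_of_smul_eq hg (hparts A (hEQ' A hA)) (hkg ▸ hQ.1 A (hEQ' A hA))
      (hrA A hA) (hrg A hA)
  have hrinj : Set.InjOn r E := fun A hA B hB h =>
    hQ.eq_of_mem (hEQ' A hA) (hEQ' B hB) (hrA A hA) (h ▸ hrA B hB)
  have hsep : ∀ t ∈ E.image r, ∀ t' ∈ E.image r, g.SameCycle t t' → t = t' := by
    simp only [forall_mem_image]
    intro A hA B hB hAB
    have hrB : r B ∈ A := hcyc A hA ▸ mem_support_cycleOf_iff.2 ⟨hAB, mem_support.2 (hrg A hA)⟩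
    rw [hQ.eq_of_mem (hEQ' A hA) (hEQ' B hB) hrB (hrA B hB)]
  obtain ⟨P, hP, hPg, hne⟩ := hQ.exists_ne_smul_eq_of_transversal hg hk hQg (T := E.image r)
    (by rw [card_image_of_injOn hrinj, hE, hkg]) (forall_mem_image.2 hrg) hsep
    (forall_mem_image.2 fun A hA => (hcyc A hA).symm ▸ hEQ' A hA)
  exact hne (huniq P hP hPg)

end IsSizedPartition

section CyclePartition

variable {n : ℕ} {g : Perm (Fin n)}

theorem isSizedPartition_cyclePartition (hg : (orderOf g).Prime)
    (hfix : #g.supportᶜ = orderOf g) : IsSizedPartition n (orderOf g) g.cyclePartition := by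
  refine ⟨fun A hA => ?_, fun a => ?_⟩
  · rcases mem_insert.1 hA with rfl | hA
    · exact hfix
    · obtain ⟨x, hx, rfl⟩ := mem_image.1 hA
      exact card_support_cycleOf_of_prime hg (mem_support.1 hx)
  by_cases ha : a ∈ g.support
  · refine ⟨(g.cycleOf a).support, ⟨mem_insert_of_mem (mem_image_of_mem _ ha),
      mem_support_cycleOf_iff.2 ⟨SameCycle.rfl, ha⟩⟩, fun C ⟨hC, haC⟩ => ?_⟩
    rcases mem_insert.1 hC with rfl | hC
    · exact absurd ha (mem_compl.1 haC)
    · obtain ⟨x, -, rfl⟩ := mem_image.1 hC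
      rw [(mem_support_cycleOf_iff.1 haC).1.cycleOf_eq]
  · refine ⟨g.supportᶜ, ⟨mem_insert_self _ _, mem_compl.2 ha⟩, fun C ⟨hC, haC⟩ => ?_⟩
    rcases mem_insert.1 hC with rfl | hC
    · rfl
    · obtain ⟨x, -, rfl⟩ := mem_image.1 hC
      obtain ⟨hxa, hx⟩ := mem_support_cycleOf_iff.1 haC
      exact absurd (hxa.mem_support_iff.1 hx) ha

theorem eq_cyclePartition_of_smul_eq (hg : (orderOf g).Prime)
    (hcyc : #g.cycleFactorsFinset < orderOf g) (hfix : #g.supportᶜ = orderOf g)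
    {P : Finset (Finset (Fin n))} (hP : IsSizedPartition n (orderOf g) P) (hPg : g • P = P) :
    P = g.cyclePartition := by
  have hparts : ∀ A ∈ P, g • A = A := by
    intro A hA
    by_contra hAg
    have hmoved : ∀ a ∈ A, a ∈ g.support := fun a ha =>
      mem_support.2 (hP.apply_ne_of_smul_ne hPg hA hAg ha)
    have hinj : Set.InjOn g.cycleOf A := fun a ha b hb hab =>
      hP.eq_of_sameCycle hg hPg hA hAg ha hb
        (mem_support_cycleOf_iff.1 (hab ▸ mem_support_cycleOf_iff.2 ⟨SameCycle.rfl, hmoved b hb⟩)).1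
    have hle := card_le_card_of_injOn _
      (fun a ha => cycleOf_mem_cycleFactorsFinset_iff.2 (hmoved a ha)) hinj
    rw [hP.1 A hA] at hle
    omega
  have hsub : P ⊆ g.cyclePartition := by
    intro A hA
    by_cases hmoved : ∃ x ∈ A, g x ≠ x
    · obtain ⟨x, hx, hgx⟩ := hmoved
      rw [← support_cycleOf_eq_of_smul_eq hg (hparts A hA) (hP.1 A hA) hx hgx]
      exact mem_insert_of_mem (mem_image_of_mem _ (mem_support.2 hgx))
    · push Not at hmoved
      rw [eq_of_subset_of_card_le (fun x hx => mem_compl.2 (notMem_support.2 (hmoved x hx)))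
        (by rw [hfix, hP.1 A hA])]
      exact mem_insert_self _ _
  refine eq_of_subset_of_card_le hsub (Nat.le_of_mul_le_mul_right ?_ hg.pos)
  rw [hP.card_mul, (isSizedPartition_cyclePartition hg hfix).card_mul]

end CyclePartition

theorem IsSizedPartition.odd_and_eq_of_unique {n k m : ℕ} {g : Perm (Fin n)}
    {Q : Finset (Finset (Fin n))} (hn : 4 < n) (hk1 : 1 < k) (hk2 : 2 * k ≤ n) (hm : m = n / k)
    (hg : (orderOf g).Prime) (hQ : IsSizedPartition n k Q)
    (huniq : ∀ P, IsSizedPartition n k P → (g • P = P ↔ P = Q)) :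
    Odd (orderOf g) ∧ k = orderOf g ∧ 2 ≤ m ∧ m ≤ orderOf g := by
  have hQg : g • Q = Q := (huniq Q hQ).2 rfl
  have huniq' : ∀ P, IsSizedPartition n k P → g • P = P → P = Q := fun P hP => (huniq P hP).1
  have hparts : ∀ A ∈ Q, g • A = A := fun A hA => hQ.smul_eq_of_unique hg hk1 hQg huniq' hA
  have hQk := hQ.card_mul
  have hmQ : m = #Q := hm.trans (Nat.div_eq_of_eq_mul_left (by omega) hQk.symm)
  have hQ2 : 2 ≤ #Q := Nat.le_of_mul_le_mul_right (hQk ▸ hk2) (by omega)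
  have hkg := hQ.orderOf_eq_of_unique hg hQg huniq' hparts hQ2
  have hQg' : #Q ≤ orderOf g := by
    have hfixed := hQ.card_filter_forall_apply_eq_le_one hk1 hQg huniq' hparts
    have hmoved := hQ.card_filter_exists_apply_ne_lt hg hk1 hkg hQg huniq' hparts
    have hsplit := card_filter_add_card_filter_not (s := Q) (p := fun A => ∀ x ∈ A, g x = x)
    push Not at hsplit
    omega
  refine ⟨hg.eq_two_or_odd'.resolve_left fun h2 => ?_, hkg.symm, hmQ ▸ hQ2, hmQ ▸ hQg'⟩
  rw [h2] at hkg hQg'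
  subst hkg
  omega

theorem exists_perm_unique_fixed {n m p : ℕ} (hp : p.Prime) (hm2 : 2 ≤ m) (hmp : m ≤ p)
    (hn : n = p * m) : ∃ g : Perm (Fin n), orderOf g = p ∧ ∃ Q, IsSizedPartition n p Q ∧
      ∀ P, IsSizedPartition n p P → (g • P = P ↔ P = Q) := by
  obtain ⟨m, rfl⟩ : ∃ m', m = m' + 1 := ⟨m - 1, by omega⟩
  have hsum : m * p ≤ Fintype.card (Fin n) := by rw [Fintype.card_fin, hn]; nlinarith
  obtain ⟨g, hg⟩ := (exists_with_cycleType_iff (Fin n) (m := Multiset.replicate m p)).2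
    ⟨by rwa [Multiset.sum_replicate, smul_eq_mul],
      fun a ha => (Multiset.eq_of_mem_replicate ha) ▸ hp.two_le⟩
  have : Fact p.Prime := ⟨hp⟩
  have hord : orderOf g = p := by
    refine orderOf_eq_prime ?_ fun h1 => ?_
    · refine orderOf_dvd_iff_pow_eq_one.1 (lcm_cycleType g ▸ Multiset.lcm_dvd.2 fun a ha => ?_)
      rw [hg] at ha
      rw [Multiset.eq_of_mem_replicate ha]
    · have hcard := congrArg Multiset.card hg
      rw [h1, cycleType_one, Multiset.card_zero, Multiset.card_replicate] at hcard
      omega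
  have hcyc : #g.cycleFactorsFinset = m := by
    rw [← Multiset.card_replicate m p, ← hg, cycleType_def, Multiset.card_map]
    rfl
  have hfix : #g.supportᶜ = p := by
    rw [card_compl, Fintype.card_fin, ← sum_cycleType, hg, Multiset.sum_replicate, smul_eq_mul,
      hn, mul_add, mul_one, mul_comm, Nat.add_sub_cancel_left]
  subst hord
  exact ⟨g, rfl, g.cyclePartition, isSizedPartition_cyclePartition hp hfix, fun P hP =>
    ⟨eq_cyclePartition_of_smul_eq hp (by omega) hfix hP, fun h => h ▸ smul_cyclePartition g⟩⟩

theorem stmt16 {n k m : ℕ} (hn : 4 < n) (hk1 : 1 < k) (hk2 : 2 * k ≤ n)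
    (hkn : k ∣ n) (hm : m = n / k) {p : ℕ} (hp : p.Prime) :
    (∃ g : Equiv.Perm (Fin n), orderOf g = p ∧
      ∃ Q : Finset (Finset (Fin n)), IsSizedPartition n k Q ∧
        (∀ P : Finset (Finset (Fin n)), IsSizedPartition n k P →
          (P.image (fun A => A.image ⇑g) = P ↔ P = Q)) ∧
        (∀ (j : ℤ) (P : Finset (Finset (Fin n))), IsSizedPartition n k P → P ≠ Q →
          P.image (fun A => A.image ⇑(g ^ j)) = P →
          ∀ R : Finset (Finset (Fin n)), IsSizedPartition n k R →
            R.image (fun A => A.image ⇑(g ^ j)) = R)) ↔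
      (Odd p ∧ k = p ∧ 2 ≤ m ∧ m ≤ p) := by
  simp only [image_image_eq_smul]
  constructor
  · rintro ⟨g, rfl, Q, hQ, huniq, -⟩
    exact hQ.odd_and_eq_of_unique hn hk1 hk2 hm hp huniq
  · rintro ⟨-, rfl, hm2, hmp⟩
    obtain ⟨g, rfl, Q, hQ, huniq⟩ :=
      exists_perm_unique_fixed hp hm2 hmp (by rw [hm, Nat.mul_div_cancel' hkn])
    refine ⟨g, rfl, Q, hQ, huniq, fun j P hP hPQ hPj R _ => ?_⟩
    have hj : (orderOf g : ℤ) ∣ j := by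
      by_contra hj
      exact hPQ ((huniq P hP).1
        (mem_of_zpow_mem_of_not_dvd (H := MulAction.stabilizer _ P) hp hj hPj))
    rw [orderOf_dvd_iff_zpow_eq_one.1 hj, one_smul]
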